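/- arXiv:math/0612188 — 4 statements merged into one kernel-verified Lean document; each statement's English description precedes it below -/
import Mathlib

section
/- Let k be a field with char(k) ≠ 2 and let A = B = k[Z_2]. The linear map τ determined by τ(b⊗a) = -(1⊗1) + (1⊗b) + (a⊗1) (together with the unitality conditions) is a twisting map. -/
open TensorProduct

noncomputable section

/-- The group algebra `k[ℤ₂]`. -/
abbrev GA (k : Type*) [Field k] := AddMonoidAlgebra k (ZMod 2)

/-- The group-like generator `a` of `k[ℤ₂]`, satisfying `a² = 1`. -/
def gen (k : Type*) [Field k] : GA k := AddMonoidAlgebra.single (1 : ZMod 2) (1 : k)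

/-- `τ : B ⊗ A → A ⊗ B` is a twisting map: unitality plus compatibility with
the multiplications of `A` and `B`. -/
def IsTwistingMap (k : Type*) [Field k] (A B : Type*) [Ring A] [Ring B]
    [Algebra k A] [Algebra k B] (τ : B ⊗[k] A →ₗ[k] A ⊗[k] B) : Prop :=
  (∀ b : B, τ (b ⊗ₜ 1) = 1 ⊗ₜ b) ∧
  (∀ a : A, τ (1 ⊗ₜ a) = a ⊗ₜ 1) ∧
  (τ ∘ₗ LinearMap.lTensor B (LinearMap.mul' k A)
      ∘ₗ (TensorProduct.assoc k B A A).toLinearMap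
    = LinearMap.rTensor B (LinearMap.mul' k A)
        ∘ₗ (TensorProduct.assoc k A A B).symm.toLinearMap
        ∘ₗ LinearMap.lTensor A τ
        ∘ₗ (TensorProduct.assoc k A B A).toLinearMap
        ∘ₗ LinearMap.rTensor A τ) ∧
  (τ ∘ₗ LinearMap.rTensor A (LinearMap.mul' k B)
      ∘ₗ (TensorProduct.assoc k B B A).symm.toLinearMap
    = LinearMap.lTensor A (LinearMap.mul' k B)
        ∘ₗ (TensorProduct.assoc k A B B).toLinearMap
        ∘ₗ LinearMap.rTensor B τ
        ∘ₗ (TensorProduct.assoc k B A B).symm.toLinearMap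
        ∘ₗ LinearMap.lTensor B τ)


/-!
Unitality alone makes both compatibility identities hold on every basis triple that contains a
unit, so they only have to be checked on `(b ⊗ a) ⊗ a` and `b ⊗ (b ⊗ a)`. There the relation
`τ (b ⊗ a) = -(1 ⊗ 1) + 1 ⊗ b + a ⊗ 1` together with `a² = 1` (resp. `b² = 1`) makes the
two sides agree after expanding.
-/

open LinearMap

namespace TensorProduct

variable {R A B : Type*} [CommRing R] [Ring A] [Ring B] [Algebra R A] [Algebra R B]

theorem rTensor_mul'_assoc_symm_one_tmul (z : A ⊗[R] B) :
    rTensor B (mul' R A) ((TensorProduct.assoc R A A B).symm (1 ⊗ₜ z)) = z := by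
  induction z using TensorProduct.induction_on <;> simp_all [tmul_add]

theorem lTensor_mul'_assoc_tmul_one (z : A ⊗[R] B) :
    lTensor A (mul' R B) (TensorProduct.assoc R A B B (z ⊗ₜ 1)) = z := by
  induction z using TensorProduct.induction_on <;> simp_all [add_tmul]

variable (τ : B ⊗[R] A →ₗ[R] A ⊗[R] B)

def twistAfterMulA : (B ⊗[R] A) ⊗[R] A →ₗ[R] A ⊗[R] B :=
  τ ∘ₗ lTensor B (mul' R A) ∘ₗ (TensorProduct.assoc R B A A).toLinearMap

def mulAAfterTwist : (B ⊗[R] A) ⊗[R] A →ₗ[R] A ⊗[R] B :=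
  rTensor B (mul' R A) ∘ₗ (TensorProduct.assoc R A A B).symm.toLinearMap
    ∘ₗ lTensor A τ ∘ₗ (TensorProduct.assoc R A B A).toLinearMap ∘ₗ rTensor A τ

def twistAfterMulB : B ⊗[R] (B ⊗[R] A) →ₗ[R] A ⊗[R] B :=
  τ ∘ₗ rTensor A (mul' R B) ∘ₗ (TensorProduct.assoc R B B A).symm.toLinearMap

def mulBAfterTwist : B ⊗[R] (B ⊗[R] A) →ₗ[R] A ⊗[R] B :=
  lTensor A (mul' R B) ∘ₗ (TensorProduct.assoc R A B B).toLinearMap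
    ∘ₗ rTensor B τ ∘ₗ (TensorProduct.assoc R B A B).symm.toLinearMap ∘ₗ lTensor B τ

@[simp]
theorem twistAfterMulA_tmul (x : B) (y y' : A) :
    twistAfterMulA τ ((x ⊗ₜ y) ⊗ₜ y') = τ (x ⊗ₜ (y * y')) := by
  simp [twistAfterMulA]

@[simp]
theorem twistAfterMulB_tmul (x x' : B) (y : A) :
    twistAfterMulB τ (x ⊗ₜ (x' ⊗ₜ y)) = τ ((x * x') ⊗ₜ y) := by
  simp [twistAfterMulB]

variable {τ}

theorem twistAfterMulA_eq_mulAAfterTwist_of_one (hA : ∀ a, τ (1 ⊗ₜ a) = a ⊗ₜ 1)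
    (hB : ∀ b, τ (b ⊗ₜ 1) = 1 ⊗ₜ b) {x : B} {y y' : A} (h : x = 1 ∨ y = 1 ∨ y' = 1) :
    twistAfterMulA τ ((x ⊗ₜ y) ⊗ₜ y') = mulAAfterTwist τ ((x ⊗ₜ y) ⊗ₜ y') := by
  rcases h with rfl | rfl | rfl
  · simp [mulAAfterTwist, hA]
  · simp [mulAAfterTwist, hB, rTensor_mul'_assoc_symm_one_tmul]
  · have h_one : ∀ z : A ⊗[R] B, rTensor B (mul' R A) ((TensorProduct.assoc R A A B).symm
        (lTensor A τ (TensorProduct.assoc R A B A (z ⊗ₜ 1)))) = z := by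
      intro z
      induction z using TensorProduct.induction_on <;> simp_all [add_tmul]
    simp [mulAAfterTwist, h_one]

theorem twistAfterMulB_eq_mulBAfterTwist_of_one (hA : ∀ a, τ (1 ⊗ₜ a) = a ⊗ₜ 1)
    (hB : ∀ b, τ (b ⊗ₜ 1) = 1 ⊗ₜ b) {x x' : B} {y : A} (h : x = 1 ∨ x' = 1 ∨ y = 1) :
    twistAfterMulB τ (x ⊗ₜ (x' ⊗ₜ y)) = mulBAfterTwist τ (x ⊗ₜ (x' ⊗ₜ y)) := by
  rcases h with rfl | rfl | rfl
  · have h_unit : ∀ z : A ⊗[R] B, lTensor A (mul' R B) (TensorProduct.assoc R A B B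
        (rTensor B τ ((TensorProduct.assoc R B A B).symm (1 ⊗ₜ z)))) = z := by
      intro z
      induction z using TensorProduct.induction_on <;> simp_all [tmul_add]
    simp [mulBAfterTwist, h_unit]
  · simp [mulBAfterTwist, hA, lTensor_mul'_assoc_tmul_one]
  · simp [mulBAfterTwist, hB]

variable {a : A} {b : B}

theorem mulAAfterTwist_tmul_tmul_self (hA : ∀ a, τ (1 ⊗ₜ a) = a ⊗ₜ 1)
    (hB : ∀ b, τ (b ⊗ₜ 1) = 1 ⊗ₜ b) (hτ : τ (b ⊗ₜ a) = -(1 ⊗ₜ 1) + 1 ⊗ₜ b + a ⊗ₜ 1)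
    (ha : a * a = 1) :
    mulAAfterTwist τ ((b ⊗ₜ a) ⊗ₜ a) = twistAfterMulA τ ((b ⊗ₜ a) ⊗ₜ a) := by
  simp only [mulAAfterTwist, twistAfterMulA_tmul, comp_apply, LinearEquiv.coe_coe, rTensor_tmul,
    lTensor_tmul, assoc_tmul, assoc_symm_tmul, mul'_apply, map_add, map_neg, tmul_add, add_tmul,
    tmul_neg, neg_tmul, hτ, hA, hB, ha, mul_one, one_mul]
  abel

theorem mulBAfterTwist_tmul_self_tmul (hA : ∀ a, τ (1 ⊗ₜ a) = a ⊗ₜ 1)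
    (hB : ∀ b, τ (b ⊗ₜ 1) = 1 ⊗ₜ b) (hτ : τ (b ⊗ₜ a) = -(1 ⊗ₜ 1) + 1 ⊗ₜ b + a ⊗ₜ 1)
    (hb : b * b = 1) :
    mulBAfterTwist τ (b ⊗ₜ (b ⊗ₜ a)) = twistAfterMulB τ (b ⊗ₜ (b ⊗ₜ a)) := by
  simp only [mulBAfterTwist, twistAfterMulB_tmul, comp_apply, LinearEquiv.coe_coe, rTensor_tmul,
    lTensor_tmul, assoc_tmul, assoc_symm_tmul, mul'_apply, map_add, map_neg, tmul_add, add_tmul,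
    tmul_neg, neg_tmul, hτ, hA, hB, hb, mul_one]
  abel

variable {ι κ : Type*} (eA : Module.Basis ι R A) (eB : Module.Basis κ R B)

theorem twistAfterMulA_eq_mulAAfterTwist (heA : ∀ i, eA i = 1 ∨ eA i = a)
    (heB : ∀ j, eB j = 1 ∨ eB j = b) (hA : ∀ a, τ (1 ⊗ₜ a) = a ⊗ₜ 1)
    (hB : ∀ b, τ (b ⊗ₜ 1) = 1 ⊗ₜ b) (hτ : τ (b ⊗ₜ a) = -(1 ⊗ₜ 1) + 1 ⊗ₜ b + a ⊗ₜ 1)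
    (ha : a * a = 1) :
    twistAfterMulA τ = mulAAfterTwist τ := by
  refine ((eB.tensorProduct eA).tensorProduct eA).ext fun ⟨⟨j, i⟩, l⟩ => ?_
  simp only [Module.Basis.tensorProduct_apply]
  by_cases h : eB j = 1 ∨ eA i = 1 ∨ eA l = 1
  · exact twistAfterMulA_eq_mulAAfterTwist_of_one hA hB h
  · push Not at h
    obtain ⟨hj, hi, hl⟩ := h
    rw [(heB j).resolve_left hj, (heA i).resolve_left hi, (heA l).resolve_left hl]
    exact (mulAAfterTwist_tmul_tmul_self hA hB hτ ha).symm

theorem twistAfterMulB_eq_mulBAfterTwist (heA : ∀ i, eA i = 1 ∨ eA i = a)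
    (heB : ∀ j, eB j = 1 ∨ eB j = b) (hA : ∀ a, τ (1 ⊗ₜ a) = a ⊗ₜ 1)
    (hB : ∀ b, τ (b ⊗ₜ 1) = 1 ⊗ₜ b) (hτ : τ (b ⊗ₜ a) = -(1 ⊗ₜ 1) + 1 ⊗ₜ b + a ⊗ₜ 1)
    (hb : b * b = 1) :
    twistAfterMulB τ = mulBAfterTwist τ := by
  refine (eB.tensorProduct (eB.tensorProduct eA)).ext fun ⟨j, l, i⟩ => ?_
  simp only [Module.Basis.tensorProduct_apply]
  by_cases h : eB j = 1 ∨ eB l = 1 ∨ eA i = 1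
  · exact twistAfterMulB_eq_mulBAfterTwist_of_one hA hB h
  · push Not at h
    obtain ⟨hj, hl, hi⟩ := h
    rw [(heB j).resolve_left hj, (heB l).resolve_left hl, (heA i).resolve_left hi]
    exact (mulBAfterTwist_tmul_self_tmul hA hB hτ hb).symm

end TensorProduct

theorem isTwistingMap_of_basis {k A B : Type*} [Field k] [Ring A] [Ring B] [Algebra k A]
    [Algebra k B] {τ : B ⊗[k] A →ₗ[k] A ⊗[k] B} {a : A} {b : B} {ι κ : Type*}
    (eA : Module.Basis ι k A) (eB : Module.Basis κ k B) (heA : ∀ i, eA i = 1 ∨ eA i = a)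
    (heB : ∀ j, eB j = 1 ∨ eB j = b) (hA : ∀ a, τ (1 ⊗ₜ a) = a ⊗ₜ 1)
    (hB : ∀ b, τ (b ⊗ₜ 1) = 1 ⊗ₜ b) (hτ : τ (b ⊗ₜ a) = -(1 ⊗ₜ 1) + 1 ⊗ₜ b + a ⊗ₜ 1)
    (ha : a * a = 1) (hb : b * b = 1) :
    IsTwistingMap k A B τ :=
  ⟨hB, hA, twistAfterMulA_eq_mulAAfterTwist eA eB heA heB hA hB hτ ha,
    twistAfterMulB_eq_mulBAfterTwist eA eB heA heB hA hB hτ hb⟩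

namespace GA

variable (k : Type*) [Field k]

theorem basis_eq_one_or_gen (i : ZMod 2) :
    AddMonoidAlgebra.basis (ZMod 2) k i = 1 ∨ AddMonoidAlgebra.basis (ZMod 2) k i = gen k := by
  fin_cases i
  exacts [Or.inl rfl, Or.inr rfl]

theorem gen_mul_gen : gen k * gen k = 1 := by
  rw [gen, AddMonoidAlgebra.single_mul_single, mul_one]
  rfl

def twist : GA k ⊗[k] GA k →ₗ[k] GA k ⊗[k] GA k :=
  let e := AddMonoidAlgebra.basis (ZMod 2) k
  (e.tensorProduct e).constr k fun (j, i) =>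
    if (j, i) = (1, 1) then -(1 ⊗ₜ 1) + 1 ⊗ₜ gen k + gen k ⊗ₜ 1 else e i ⊗ₜ e j

theorem twist_basis_tmul_basis (j i : ZMod 2) :
    twist k (AddMonoidAlgebra.basis (ZMod 2) k j ⊗ₜ AddMonoidAlgebra.basis (ZMod 2) k i) =
      if (j, i) = (1, 1) then -(1 ⊗ₜ 1) + 1 ⊗ₜ gen k + gen k ⊗ₜ 1
      else AddMonoidAlgebra.basis (ZMod 2) k i ⊗ₜ AddMonoidAlgebra.basis (ZMod 2) k j := by
  rw [twist, ← Module.Basis.tensorProduct_apply, Module.Basis.constr_basis]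

theorem twist_tmul_one (b : GA k) : twist k (b ⊗ₜ 1) = 1 ⊗ₜ b := by
  have h : twist k ∘ₗ (mk k (GA k) (GA k)).flip 1 = mk k (GA k) (GA k) 1 := by
    refine (AddMonoidAlgebra.basis (ZMod 2) k).ext fun j => ?_
    simpa [← AddMonoidAlgebra.one_def] using twist_basis_tmul_basis k j 0
  exact LinearMap.congr_fun h b

theorem twist_one_tmul (a : GA k) : twist k (1 ⊗ₜ a) = a ⊗ₜ 1 := by
  have h : twist k ∘ₗ mk k (GA k) (GA k) 1 = (mk k (GA k) (GA k)).flip 1 := by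
    refine (AddMonoidAlgebra.basis (ZMod 2) k).ext fun i => ?_
    simpa [← AddMonoidAlgebra.one_def] using twist_basis_tmul_basis k 0 i
  exact LinearMap.congr_fun h a

theorem twist_gen_tmul_gen :
    twist k (gen k ⊗ₜ gen k) = -(1 ⊗ₜ 1) + 1 ⊗ₜ gen k + gen k ⊗ₜ 1 :=
  twist_basis_tmul_basis k 1 1

end GA

theorem stmt3_general (k : Type*) [Field k] :
    ∃ τ : GA k ⊗[k] GA k →ₗ[k] GA k ⊗[k] GA k,
      IsTwistingMap k (GA k) (GA k) τ ∧
      τ (gen k ⊗ₜ gen k) =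
        -((1 : GA k) ⊗ₜ (1 : GA k)) + (1 : GA k) ⊗ₜ gen k + gen k ⊗ₜ (1 : GA k) :=
  ⟨GA.twist k,
    isTwistingMap_of_basis _ _ (GA.basis_eq_one_or_gen k) (GA.basis_eq_one_or_gen k)
      (GA.twist_one_tmul k) (GA.twist_tmul_one k) (GA.twist_gen_tmul_gen k) (GA.gen_mul_gen k)
      (GA.gen_mul_gen k),
    GA.twist_gen_tmul_gen k⟩

/-- For `char k ≠ 2`, the linear map determined by
`τ(b⊗a) = -(1⊗1) + (1⊗b) + (a⊗1)` (together with unitality) is a twisting map. -/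
theorem stmt3 (k : Type*) [Field k] (hchar : ringChar k ≠ 2) :
    ∃ τ : GA k ⊗[k] GA k →ₗ[k] GA k ⊗[k] GA k,
      IsTwistingMap k (GA k) (GA k) τ ∧
      τ (gen k ⊗ₜ gen k) =
        -((1 : GA k) ⊗ₜ (1 : GA k)) + (1 : GA k) ⊗ₜ gen k + gen k ⊗ₜ (1 : GA k) :=
  stmt3_general k
end
end

section
/- Let k be a field with char(k) ≠ 2. The algebra A_{-2} = k⟨a,b | a²=b²=1, ab+ba=-2⟩ is isomorphic to the four-dimensional algebra R with basis {e,f,x,y} and multiplication table: ee=e, ef=0, ex=0, ey=y; fe=0, ff=f, fx=x, fy=0; xe=x, xf=0, xx=0, xy=0; ye=0, yf=y, yx=0, yy=0. The isomorphism φ: R → A_{-2} sends e ↦ (1-a)/2, f ↦ (1+a)/2, x ↦ (1+b+a+ab)/4, y ↦ (1-b-a+ab)/4. -/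
noncomputable section

/-- The relations `a² = 1`, `b² = 1`, `ab + ba = q` on the free algebra `k⟨a,b⟩`,
where `a = ι true` and `b = ι false`. -/
inductive AqRel (k : Type*) [Field k] (q : k) :
    FreeAlgebra k Bool → FreeAlgebra k Bool → Prop
  | aa : AqRel k q (FreeAlgebra.ι k true * FreeAlgebra.ι k true) 1
  | bb : AqRel k q (FreeAlgebra.ι k false * FreeAlgebra.ι k false) 1
  | anti : AqRel k q
      (FreeAlgebra.ι k true * FreeAlgebra.ι k false
        + FreeAlgebra.ι k false * FreeAlgebra.ι k true)
      (algebraMap k (FreeAlgebra k Bool) q)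

/-- `A_q = k⟨a,b | a² = 1, b² = 1, ab + ba = q⟩`. -/
abbrev Aq (k : Type*) [Field k] (q : k) := RingQuot (AqRel k q)

/-- The class of the generator `a` in `A_q`. -/
def aE (k : Type*) [Field k] (q : k) : Aq k q :=
  RingQuot.mkAlgHom k (AqRel k q) (FreeAlgebra.ι k true)

/-- The class of the generator `b` in `A_q`. -/
def bE (k : Type*) [Field k] (q : k) : Aq k q :=
  RingQuot.mkAlgHom k (AqRel k q) (FreeAlgebra.ι k false)

/-- The idempotent `e` (vertex) of `kQ/(Q_{≥2})`, realized in `M₂(k) × M₂(k)`. -/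
def eP (k : Type*) [Field k] : Matrix (Fin 2) (Fin 2) k × Matrix (Fin 2) (Fin 2) k :=
  (!![1, 0; 0, 0], !![1, 0; 0, 0])

/-- The idempotent `f` (vertex) of `kQ/(Q_{≥2})`. -/
def fP (k : Type*) [Field k] : Matrix (Fin 2) (Fin 2) k × Matrix (Fin 2) (Fin 2) k :=
  (!![0, 0; 0, 1], !![0, 0; 0, 1])

/-- The arrow `x` of the round-trip quiver, satisfying `f·x = x = x·e`, `x² = 0`. -/
def xP (k : Type*) [Field k] : Matrix (Fin 2) (Fin 2) k × Matrix (Fin 2) (Fin 2) k :=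
  (!![0, 0; 1, 0], 0)

/-- The arrow `y` of the round-trip quiver, satisfying `e·y = y = y·f`, `y² = 0`. -/
def yP (k : Type*) [Field k] : Matrix (Fin 2) (Fin 2) k × Matrix (Fin 2) (Fin 2) k :=
  (0, !![0, 1; 0, 0])

/-- `R = kQ/(Q_{≥2})`, the quotient of the path algebra of the round-trip quiver by
the ideal generated by paths of length `≥ 2`: the four-dimensional algebra with
basis `{e, f, x, y}` (with `e, f` orthogonal idempotents summing to `1`,
`f·x = x = x·e`, `e·y = y = y·f`, and all products of `x, y` zero), realized as
the subalgebra of `M₂(k) × M₂(k)` generated by these elements. -/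
def RQ (k : Type*) [Field k] :
    Subalgebra k (Matrix (Fin 2) (Fin 2) k × Matrix (Fin 2) (Fin 2) k) :=
  Algebra.adjoin k {eP k, fP k, xP k, yP k}

/-- `e` as an element of `R`. -/
def eR (k : Type*) [Field k] : RQ k := ⟨eP k, Algebra.subset_adjoin (by simp)⟩

/-- `f` as an element of `R`. -/
def fR (k : Type*) [Field k] : RQ k := ⟨fP k, Algebra.subset_adjoin (by simp)⟩

/-- `x` as an element of `R`. -/
def xR (k : Type*) [Field k] : RQ k := ⟨xP k, Algebra.subset_adjoin (by simp)⟩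

/-- `y` as an element of `R`. -/
def yR (k : Type*) [Field k] : RQ k := ⟨yP k, Algebra.subset_adjoin (by simp)⟩

----------------------------------------------------------------------
-- auxiliary material
section Aux
variable (k : Type*) [Field k]

abbrev Amb := Matrix (Fin 2) (Fin 2) k × Matrix (Fin 2) (Fin 2) k

/-- image of `a` -/
def MA : Amb k := (!![-1, 0; 0, 1], !![-1, 0; 0, 1])
/-- image of `b` -/
def MB : Amb k := (!![1, 0; 2, -1], !![1, -2; 0, -1])

lemma MA_mul_MA : MA k * MA k = 1 := by
  simp [MA, Prod.ext_iff, Matrix.mul_fin_two, Matrix.one_fin_two]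

lemma MB_mul_MB : MB k * MB k = 1 := by
  simp [MB, Prod.ext_iff, Matrix.mul_fin_two, Matrix.one_fin_two]

lemma MA_anti : MA k * MB k + MB k * MA k = algebraMap k (Amb k) (-2) := by
  simp [MA, MB, Prod.ext_iff, Matrix.mul_fin_two, Algebra.algebraMap_eq_smul_one,
    Matrix.one_fin_two, Matrix.smul_of, Matrix.smul_cons]
  norm_num

/-- the free lift -/
def chi0 : FreeAlgebra k Bool →ₐ[k] Amb k :=
  FreeAlgebra.lift k (fun t => if t then MA k else MB k)

lemma chi0_rel : ∀ ⦃u v : FreeAlgebra k Bool⦄, AqRel k (-2) u v → chi0 k u = chi0 k v := by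
  rintro u v (_ | _ | _) <;>
    simp [chi0, FreeAlgebra.lift_ι_apply, MA_mul_MA, MB_mul_MB, MA_anti]

/-- the induced map on `A_{-2}` -/
def chi : Aq k (-2) →ₐ[k] Amb k :=
  RingQuot.liftAlgHom k ⟨chi0 k, chi0_rel k⟩

lemma chi_a : chi k (aE k (-2)) = MA k := by
  rw [aE, chi, RingQuot.liftAlgHom_mkAlgHom_apply]
  simp [chi0, FreeAlgebra.lift_ι_apply]

lemma chi_b : chi k (bE k (-2)) = MB k := by
  rw [bE, chi, RingQuot.liftAlgHom_mkAlgHom_apply]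
  simp [chi0, FreeAlgebra.lift_ι_apply]

-- relations in Aq
lemma haa : aE k (-2) * aE k (-2) = 1 := by
  rw [aE, ← map_mul]
  exact (RingQuot.mkAlgHom_rel k AqRel.aa).trans (map_one _)

lemma hbb : bE k (-2) * bE k (-2) = 1 := by
  rw [bE, ← map_mul]
  exact (RingQuot.mkAlgHom_rel k AqRel.bb).trans (map_one _)

lemma hba : bE k (-2) * aE k (-2) = (-2 : k) • (1 : Aq k (-2)) - aE k (-2) * bE k (-2) := by
  have h : aE k (-2) * bE k (-2) + bE k (-2) * aE k (-2)
      = algebraMap k (Aq k (-2)) (-2) := by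
    rw [aE, bE, ← map_mul, ← map_mul, ← map_add]
    exact (RingQuot.mkAlgHom_rel k AqRel.anti).trans (AlgHom.commutes _ _)
  rw [Algebra.algebraMap_eq_smul_one] at h
  exact eq_sub_of_add_eq' h

-- spanning
def SpanS : Submodule k (Aq k (-2)) :=
  Submodule.span k {1, aE k (-2), bE k (-2), aE k (-2) * bE k (-2)}

lemma one_mem_S : (1 : Aq k (-2)) ∈ SpanS k := Submodule.subset_span (by simp)
lemma a_mem_S : aE k (-2) ∈ SpanS k := Submodule.subset_span (by simp)
lemma b_mem_S : bE k (-2) ∈ SpanS k := Submodule.subset_span (by simp)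
lemma ab_mem_S : aE k (-2) * bE k (-2) ∈ SpanS k := Submodule.subset_span (by simp)

lemma mul_mem_S : ∀ u ∈ SpanS k, ∀ v ∈ SpanS k, u * v ∈ SpanS k := by
  set a := aE k (-2); set b := bE k (-2)
  have key : ∀ u ∈ ({1, a, b, a * b} : Set (Aq k (-2))),
      ∀ v ∈ ({1, a, b, a * b} : Set (Aq k (-2))), u * v ∈ SpanS k := by
    rintro u (rfl | rfl | rfl | rfl) v (rfl | rfl | rfl | rfl)
    · rw [one_mul]; exact one_mem_S k
    · rw [one_mul]; exact a_mem_S k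
    · rw [one_mul]; exact b_mem_S k
    · rw [one_mul]; exact ab_mem_S k
    · rw [mul_one]; exact a_mem_S k
    · rw [haa]; exact one_mem_S k
    · exact ab_mem_S k
    · rw [← mul_assoc, haa, one_mul]; exact b_mem_S k
    · rw [mul_one]; exact b_mem_S k
    · rw [hba]; exact sub_mem (Submodule.smul_mem _ _ (one_mem_S k)) (ab_mem_S k)
    · rw [hbb]; exact one_mem_S k
    · have h : b * (a * b) = (-2 : k) • b - a := by
        rw [← mul_assoc, hba, sub_mul, smul_mul_assoc, one_mul, mul_assoc, hbb, mul_one]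
      rw [h]; exact sub_mem (Submodule.smul_mem _ _ (b_mem_S k)) (a_mem_S k)
    · rw [mul_one]; exact ab_mem_S k
    · have h : a * b * a = (-2 : k) • a - b := by
        rw [mul_assoc, hba, mul_sub, mul_smul_comm, mul_one, ← mul_assoc, haa, one_mul]
      rw [h]; exact sub_mem (Submodule.smul_mem _ _ (a_mem_S k)) (b_mem_S k)
    · rw [mul_assoc, hbb, mul_one]; exact a_mem_S k
    · have h : a * b * (a * b) = (-2 : k) • (a * b) - 1 := by
        rw [mul_assoc, ← mul_assoc b, hba, sub_mul, smul_mul_assoc, one_mul,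
          mul_assoc a b b, hbb, mul_one, mul_sub, mul_smul_comm, haa]
      rw [h]; exact sub_mem (Submodule.smul_mem _ _ (ab_mem_S k)) (one_mem_S k)
  intro u hu v hv
  induction hv using Submodule.span_induction with
  | mem w hw =>
    induction hu using Submodule.span_induction with
    | mem u' hu' => exact key u' hu' w hw
    | zero => rw [zero_mul]; exact (SpanS k).zero_mem
    | add x y hx hy ihx ihy => rw [add_mul]; exact add_mem ihx ihy
    | smul c x hx ih => rw [smul_mul_assoc]; exact (SpanS k).smul_mem c ih
  | zero => rw [mul_zero]; exact (SpanS k).zero_mem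
  | add x y hx hy ihx ihy => rw [mul_add]; exact add_mem ihx ihy
  | smul c x hx ih => rw [mul_smul_comm]; exact (SpanS k).smul_mem c ih

lemma span_top : ∀ z : Aq k (-2), z ∈ SpanS k := by
  intro z
  obtain ⟨w, rfl⟩ := RingQuot.mkAlgHom_surjective k (AqRel k (-2)) z
  induction w using FreeAlgebra.induction with
  | grade0 r =>
    rw [AlgHom.commutes, Algebra.algebraMap_eq_smul_one]
    exact (SpanS k).smul_mem r (one_mem_S k)
  | grade1 x =>
    cases x
    · exact b_mem_S k
    · exact a_mem_S k
  | mul u v hu hv => rw [map_mul]; exact mul_mem_S k _ hu _ hv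
  | add u v hu hv => rw [map_add]; exact add_mem hu hv

end Aux

section Aux2
variable (k : Type*) [Field k]

lemma chi_inj (h2 : (2:k) ≠ 0) : Function.Injective (chi k) := by
  rw [injective_iff_map_eq_zero]
  intro z hz
  have hm := span_top k z
  rw [SpanS, Submodule.mem_span_insert] at hm
  obtain ⟨c0, z1, hz1, rfl⟩ := hm
  rw [Submodule.mem_span_insert] at hz1
  obtain ⟨c1, z2, hz2, rfl⟩ := hz1
  rw [Submodule.mem_span_insert] at hz2
  obtain ⟨c2, z3, hz3, rfl⟩ := hz2
  rw [Submodule.mem_span_singleton] at hz3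
  obtain ⟨c3, rfl⟩ := hz3
  simp only [map_add, map_smul, map_one, map_mul, chi_a, chi_b] at hz
  have h1 := congrArg Prod.fst hz
  have h2' := congrArg Prod.snd hz
  simp only [MA, MB, Prod.fst_add, Prod.snd_add, Prod.smul_fst, Prod.smul_snd,
    Prod.fst_one, Prod.snd_one, Prod.fst_mul, Prod.snd_mul, Prod.fst_zero, Prod.snd_zero,
    Matrix.mul_fin_two] at h1 h2'
  rw [← Matrix.ext_iff] at h1 h2'
  have e00 := h1 0 0
  have e11 := h1 1 1
  have e10 := h1 1 0
  have e01 := h2' 0 1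
  simp [Matrix.one_fin_two] at e00 e11 e10 e01
  have hmul : ∀ c : k, (2:k) * c = 0 → c = 0 := fun c h =>
    (mul_eq_zero.mp h).resolve_left h2
  have hc3 : c3 = 0 := hmul _ (hmul _ (by linear_combination e10 + e01))
  have hc2 : c2 = 0 := hmul _ (hmul _ (by linear_combination e10 - e01))
  have hc0 : c0 = 0 := hmul _ (by linear_combination e00 + e11 + 2 * hc3)
  have hc1 : c1 = 0 := hmul _ (by linear_combination e11 - e00 + 2 * hc2)
  rw [hc0, hc1, hc2, hc3]
  simp

end Aux2

section Aux3
variable (k : Type*) [Field k]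

lemma MA_mem : MA k ∈ RQ k := by
  have h : MA k = fP k - eP k := by
        refine Prod.ext ?_ ?_ <;> apply Matrix.ext <;> intro i j <;> fin_cases i <;> fin_cases j <;> simp [MA, fP, eP]
  rw [h]
  exact sub_mem (Algebra.subset_adjoin (by simp)) (Algebra.subset_adjoin (by simp))

lemma MB_mem : MB k ∈ RQ k := by
  have h : MB k = eP k - fP k + (2:k) • xP k - (2:k) • yP k := by
        refine Prod.ext ?_ ?_ <;> apply Matrix.ext <;> intro i j <;> fin_cases i <;> fin_cases j <;> simp [MB, fP, eP, xP, yP]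
  rw [h]
  exact sub_mem (add_mem (sub_mem (Algebra.subset_adjoin (by simp))
    (Algebra.subset_adjoin (by simp)))
    (SMulMemClass.smul_mem _ (Algebra.subset_adjoin (by simp))))
    (SMulMemClass.smul_mem _ (Algebra.subset_adjoin (by simp)))

lemma chi_mem : ∀ z : Aq k (-2), chi k z ∈ RQ k := by
  intro z
  induction span_top k z using Submodule.span_induction with
  | mem w hw =>
    rcases hw with rfl | rfl | rfl | rfl
    · rw [map_one]; exact one_mem _
    · rw [chi_a]; exact MA_mem k
    · rw [chi_b]; exact MB_mem k
    · rw [map_mul, chi_a, chi_b]; exact mul_mem (MA_mem k) (MB_mem k)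
  | zero => rw [map_zero]; exact zero_mem _
  | add x y hx hy ihx ihy => rw [map_add]; exact add_mem ihx ihy
  | smul c x hx ih => rw [map_smul]; exact SMulMemClass.smul_mem c ih

def psi : Aq k (-2) →ₐ[k] RQ k := (chi k).codRestrict (RQ k) (chi_mem k)

lemma chi_e (h2 : (2:k) ≠ 0) : chi k ((2⁻¹:k) • (1 - aE k (-2))) = eP k := by
  rw [map_smul, map_sub, map_one, chi_a]
  refine Prod.ext ?_ ?_ <;> apply Matrix.ext <;> intro i j <;> fin_cases i <;> fin_cases j <;> simp [MA, eP, Matrix.one_fin_two] <;> (try field_simp) <;> (try norm_num)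

lemma chi_f (h2 : (2:k) ≠ 0) : chi k ((2⁻¹:k) • (1 + aE k (-2))) = fP k := by
  rw [map_smul, map_add, map_one, chi_a]
  refine Prod.ext ?_ ?_ <;> apply Matrix.ext <;> intro i j <;> fin_cases i <;> fin_cases j <;> simp [MA, fP, Matrix.one_fin_two] <;> (try field_simp) <;> (try norm_num)

lemma chi_x (h2 : (2:k) ≠ 0) :
    chi k ((4⁻¹:k) • (1 + bE k (-2) + aE k (-2) + aE k (-2) * bE k (-2))) = xP k := by
  have h4 : (4:k) ≠ 0 := by
    have : (4:k) = 2 * 2 := by norm_num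
    rw [this]; exact mul_ne_zero h2 h2
  rw [map_smul, map_add, map_add, map_add, map_one, map_mul, chi_a, chi_b]
  refine Prod.ext ?_ ?_ <;> apply Matrix.ext <;> intro i j <;> fin_cases i <;> fin_cases j <;> simp [MA, MB, xP, Matrix.one_fin_two, Matrix.mul_fin_two] <;> (try field_simp) <;> (try ring)

lemma chi_y (h2 : (2:k) ≠ 0) :
    chi k ((4⁻¹:k) • (1 - bE k (-2) - aE k (-2) + aE k (-2) * bE k (-2))) = yP k := by
  have h4 : (4:k) ≠ 0 := by
    have : (4:k) = 2 * 2 := by norm_num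
    rw [this]; exact mul_ne_zero h2 h2
  rw [map_smul, map_add, map_sub, map_sub, map_one, map_mul, chi_a, chi_b]
  refine Prod.ext ?_ ?_ <;> apply Matrix.ext <;> intro i j <;> fin_cases i <;> fin_cases j <;> simp [MA, MB, yP, Matrix.one_fin_two, Matrix.mul_fin_two] <;> (try field_simp) <;> (try ring)

lemma psi_surj (h2 : (2:k) ≠ 0) : Function.Surjective (psi k) := by
  have cover : ∀ m ∈ RQ k, ∃ w, chi k w = m := by
    intro m hm
    induction hm using Algebra.adjoin_induction with
    | mem s hs =>
      rcases hs with rfl | rfl | rfl | rfl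
      · exact ⟨_, chi_e k h2⟩
      · exact ⟨_, chi_f k h2⟩
      · exact ⟨_, chi_x k h2⟩
      · exact ⟨_, chi_y k h2⟩
    | algebraMap r => exact ⟨algebraMap k _ r, AlgHom.commutes _ _⟩
    | add x y hx hy ihx ihy =>
      obtain ⟨w1, rfl⟩ := ihx; obtain ⟨w2, rfl⟩ := ihy
      exact ⟨w1 + w2, map_add _ _ _⟩
    | mul x y hx hy ihx ihy =>
      obtain ⟨w1, rfl⟩ := ihx; obtain ⟨w2, rfl⟩ := ihy
      exact ⟨w1 * w2, map_mul _ _ _⟩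
  rintro ⟨m, hm⟩
  obtain ⟨w, hw⟩ := cover m hm
  exact ⟨w, Subtype.ext hw⟩

end Aux3

/-- For `char k ≠ 2`, `A_{-2} ≅ R = kQ/(Q_{≥2})`, with the isomorphism
`φ : R → A_{-2}` sending `e ↦ (1-a)/2`, `f ↦ (1+a)/2`, `x ↦ (1+b+a+ab)/4`,
`y ↦ (1-b-a+ab)/4`. -/
theorem stmt10 (k : Type*) [Field k] (hchar : ringChar k ≠ 2) :
    ∃ φ : RQ k ≃ₐ[k] Aq k (-2),
      φ (eR k) = (2⁻¹ : k) • (1 - aE k (-2)) ∧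
      φ (fR k) = (2⁻¹ : k) • (1 + aE k (-2)) ∧
      φ (xR k) = (4⁻¹ : k) • (1 + bE k (-2) + aE k (-2) + aE k (-2) * bE k (-2)) ∧
      φ (yR k) = (4⁻¹ : k) • (1 - bE k (-2) - aE k (-2) + aE k (-2) * bE k (-2)) := by
  have h2 : (2:k) ≠ 0 := Ring.two_ne_zero hchar
  have hpsi_inj : Function.Injective (psi k) := fun z1 z2 h =>
    chi_inj k h2 (congrArg Subtype.val h)
  let E := AlgEquiv.ofBijective (psi k) ⟨hpsi_inj, psi_surj k h2⟩
  have hE : ∀ w, E w = psi k w := fun w => rfl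
  refine ⟨E.symm, ?_, ?_, ?_, ?_⟩
  · rw [AlgEquiv.symm_apply_eq, hE]
    exact Subtype.ext (chi_e k h2).symm
  · rw [AlgEquiv.symm_apply_eq, hE]
    exact Subtype.ext (chi_f k h2).symm
  · rw [AlgEquiv.symm_apply_eq, hE]
    exact Subtype.ext (chi_x k h2).symm
  · rw [AlgEquiv.symm_apply_eq, hE]
    exact Subtype.ext (chi_y k h2).symm
end
end

section
/- Let k be a field. In the algebra S = k{u,v} ⊗ k[X]/(X²-X) with multiplication determined by Xu = -a_u·u + a_u·v + vX and Xv = a_u·u - a_u·v + uX (where a_u ∈ k, a_v = -1 - a_u), the elements satisfy (vXu)(uXv) = a_u a_v · v and (uXv)(vXu) = a_u a_v · u. -/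
/-!
Write `p, q` for `u, v` in either order: the relations are symmetric under `u ↔ v`.
As `q p = 0`, the relation for `X p` gives `q X p = a q + q X`, and likewise `q X q = -a q`.
Since `p` and `X` are idempotent, `(q X p)(p X q) = (a q + q X) X q = (a + 1) q X q = -a(a + 1) q`.
-/

section IdempotentCorners

variable {k S : Type*} [CommRing k] [Ring S] [Algebra k S] {p q X : S} {a : k}

theorem mul_mul_eq_smul_add_mul_of_mul_eq (hXp : X * p = -(a • p) + a • q + q * X)
    (hq : q * q = q) (hqp : q * p = 0) : q * X * p = a • q + q * X := by
  rw [mul_assoc, hXp, mul_add, mul_add, mul_neg, mul_smul_comm, mul_smul_comm, hqp, hq,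
    ← mul_assoc, hq, smul_zero, neg_zero, zero_add]

theorem mul_mul_self_eq_neg_smul_of_mul_eq (hXp : X * p = -(a • p) + a • q + q * X)
    (hp : p * p = p) (hpq : p * q = 0) : p * X * p = -(a • p) := by
  rw [mul_assoc, hXp, mul_add, mul_add, mul_neg, mul_smul_comm, mul_smul_comm, hpq, hp,
    ← mul_assoc, hpq, zero_mul, smul_zero, add_zero, add_zero]

theorem mul_mul_mul_mul_mul_eq_smul (hX : X * X = X) (hp : p * p = p) (hq : q * q = q)
    (hqp : q * p = 0)
    (hXp : X * p = -(a • p) + a • q + q * X) (hXq : X * q = -(a • q) + a • p + p * X) :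
    (q * X * p) * (p * X * q) = (a * (-1 - a)) • q := by
  have hqXq := mul_mul_self_eq_neg_smul_of_mul_eq hXq hq hqp
  calc (q * X * p) * (p * X * q) = q * X * (p * p) * X * q := by simp only [mul_assoc]
    _ = (a • q + q * X) * X * q := by rw [hp, mul_mul_eq_smul_add_mul_of_mul_eq hXp hq hqp]
    _ = a • (q * X * q) + q * (X * X) * q := by
      rw [add_mul, add_mul, smul_mul_assoc, smul_mul_assoc, mul_assoc q X X]
    _ = (a * (-1 - a)) • q := by rw [hX, hqXq]; module

end IdempotentCorners

theorem stmt17_general (k : Type*) [Field k] (S : Type*) [Ring S] [Algebra k S]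
    (u v X : S) (a_u a_v : k) (hav : a_v = -1 - a_u)
    (hu : u * u = u) (hv : v * v = v)
    (huv0 : u * v = 0) (hvu0 : v * u = 0) (hX : X * X = X)
    (hXu : X * u = -(a_u • u) + a_u • v + v * X)
    (hXv : X * v = a_u • u - a_u • v + u * X) :
    (v * X * u) * (u * X * v) = (a_u * a_v) • v ∧
    (u * X * v) * (v * X * u) = (a_u * a_v) • u := by
  have hXv' : X * v = -(a_u • v) + a_u • u + u * X := by rw [hXv]; abel
  subst hav
  exact ⟨mul_mul_mul_mul_mul_eq_smul hX hu hv hvu0 hXu hXv',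
    mul_mul_mul_mul_mul_eq_smul hX hv hu huv0 hXv' hXu⟩

/-- In the algebra `S = k{u,v} ⊗ k[X]/(X²-X)` (noncommutative duplicate of `k²`
for the round-trip quiver), with multiplication determined by
`Xu = -a_u·u + a_u·v + vX` and `Xv = a_u·u - a_u·v + uX` (where `a_v = -1 - a_u`),
one has `(vXu)(uXv) = a_u a_v · v` and `(uXv)(vXu) = a_u a_v · u`. -/
theorem stmt17 (k : Type*) [Field k] (S : Type*) [Ring S] [Algebra k S]
    (u v X : S) (a_u a_v : k) (hav : a_v = -1 - a_u)
    (huv : u + v = 1) (hu : u * u = u) (hv : v * v = v)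
    (huv0 : u * v = 0) (hvu0 : v * u = 0) (hX : X * X = X)
    (hXu : X * u = -(a_u • u) + a_u • v + v * X)
    (hXv : X * v = a_u • u - a_u • v + u * X) :
    (v * X * u) * (u * X * v) = (a_u * a_v) • v ∧
    (u * X * v) * (v * X * u) = (a_u * a_v) • u :=
  stmt17_general k S u v X a_u a_v hav hu hv huv0 hvu0 hX hXu hXv
end

section
/- Let k be a field with char(k) ≠ 2. The map f: A_{-2} → A_2 defined on the basis {1⊗1, 1⊗b, a⊗1, a⊗b} by f(1⊗1)=1⊗1, f(1⊗b)=a⊗1, f(a⊗1)=(1⊗b)-2(a⊗1), f(a⊗b)=-(a⊗b), where A_q denotes the twisted tensor product k[Z_2]⊗_τ k[Z_2] with relations a²=b²=1 and ba = q·1 - ab, is an algebra isomorphism. -/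
noncomputable section

/-!
Over any field and for any `q`, the assignment `a ↦ b - q a`, `b ↦ a` respects the defining
relations of `A_{-q}` inside `A_q`, since `(b - q a)² = 1 + q² - q (ab + ba) = 1`; and
`a ↦ b`, `b ↦ a + q b` does the same in the other direction. The two homomorphisms are
mutually inverse on the generators, hence `A_{-q} ≃ A_q`. The image of `ab` is
`(b - q a) a = ba - q = -ab`.
-/

namespace Aq

section Relations

variable (k : Type*) [Field k] (q : k)

theorem aE_mul_aE : aE k q * aE k q = 1 := by
  simpa [aE] using RingQuot.mkAlgHom_rel k (AqRel.aa (k := k) (q := q))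

theorem bE_mul_bE : bE k q * bE k q = 1 := by
  simpa [bE] using RingQuot.mkAlgHom_rel k (AqRel.bb (k := k) (q := q))

theorem aE_mul_bE_add_bE_mul_aE :
    aE k q * bE k q + bE k q * aE k q = algebraMap k (Aq k q) q := by
  simpa [aE, bE] using RingQuot.mkAlgHom_rel k (AqRel.anti (k := k) (q := q))

theorem aE_mul_bE_add_bE_mul_aE_eq_smul_one :
    aE k q * bE k q + bE k q * aE k q = q • (1 : Aq k q) :=
  (aE_mul_bE_add_bE_mul_aE k q).trans (Algebra.algebraMap_eq_smul_one q)

end Relations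

variable {k : Type*} [Field k] {q : k} {A : Type*} [Semiring A] [Algebra k A]

def lift (x y : A) (hx : x * x = 1) (hy : y * y = 1)
    (hxy : x * y + y * x = algebraMap k A q) : Aq k q →ₐ[k] A :=
  RingQuot.liftAlgHom k ⟨FreeAlgebra.lift k fun t => if t then x else y, by
    rintro _ _ (_ | _ | _) <;> simp [hx, hy, hxy]⟩

section lift

variable {x y : A} {hx : x * x = 1} {hy : y * y = 1} {hxy : x * y + y * x = algebraMap k A q}

@[simp]
theorem lift_aE : lift x y hx hy hxy (aE k q) = x := by
  simp [lift, aE]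

@[simp]
theorem lift_bE : lift x y hx hy hxy (bE k q) = y := by
  simp [lift, bE]

end lift

theorem algHom_ext {f g : Aq k q →ₐ[k] A} (ha : f (aE k q) = g (aE k q))
    (hb : f (bE k q) = g (bE k q)) : f = g := by
  refine RingQuot.ringQuot_ext' k f g (FreeAlgebra.hom_ext (funext fun t => ?_))
  cases t
  · exact hb
  · exact ha

theorem sq_bE_sub_smul_aE : (bE k q - q • aE k q) * (bE k q - q • aE k q) = 1 := by
  have h := aE_mul_bE_add_bE_mul_aE_eq_smul_one k q
  simp only [sub_mul, mul_sub, smul_mul_assoc, mul_smul_comm]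
  linear_combination (norm := module) bE_mul_bE k q + (q * q) • aE_mul_aE k q - q • h

theorem sq_aE_add_smul_bE : (aE k (-q) + q • bE k (-q)) * (aE k (-q) + q • bE k (-q)) = 1 := by
  have h := aE_mul_bE_add_bE_mul_aE_eq_smul_one k (-q)
  simp only [add_mul, mul_add, smul_mul_assoc, mul_smul_comm]
  linear_combination (norm := module) aE_mul_aE k (-q) + (q * q) • bE_mul_bE k (-q) + q • h

theorem anticomm_bE_sub_smul_aE :
    (bE k q - q • aE k q) * aE k q + aE k q * (bE k q - q • aE k q) =
      algebraMap k (Aq k q) (-q) := by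
  have h := aE_mul_bE_add_bE_mul_aE_eq_smul_one k q
  rw [Algebra.algebraMap_eq_smul_one]
  simp only [sub_mul, mul_sub, smul_mul_assoc, mul_smul_comm]
  linear_combination (norm := module) h - (2 * q) • aE_mul_aE k q

theorem anticomm_aE_add_smul_bE :
    bE k (-q) * (aE k (-q) + q • bE k (-q)) + (aE k (-q) + q • bE k (-q)) * bE k (-q) =
      algebraMap k (Aq k (-q)) q := by
  have h := aE_mul_bE_add_bE_mul_aE_eq_smul_one k (-q)
  rw [Algebra.algebraMap_eq_smul_one]
  simp only [add_mul, mul_add, smul_mul_assoc, mul_smul_comm]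
  linear_combination (norm := module) h + (2 * q) • bE_mul_bE k (-q)

def negEquiv (q : k) : Aq k (-q) ≃ₐ[k] Aq k q :=
  AlgEquiv.ofAlgHom
    (lift (bE k q - q • aE k q) (aE k q) sq_bE_sub_smul_aE (aE_mul_aE k q)
      anticomm_bE_sub_smul_aE)
    (lift (bE k (-q)) (aE k (-q) + q • bE k (-q)) (bE_mul_bE k (-q)) sq_aE_add_smul_bE
      anticomm_aE_add_smul_bE)
    (algHom_ext (by simp) (by simp))
    (algHom_ext (by simp) (by simp))

@[simp]
theorem negEquiv_aE : negEquiv q (aE k (-q)) = bE k q - q • aE k q :=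
  lift_aE

@[simp]
theorem negEquiv_bE : negEquiv q (bE k (-q)) = aE k q :=
  lift_bE

theorem negEquiv_aE_mul_bE : negEquiv q (aE k (-q) * bE k (-q)) = -(aE k q * bE k q) := by
  have h := aE_mul_bE_add_bE_mul_aE_eq_smul_one k q
  rw [map_mul, negEquiv_aE, negEquiv_bE, sub_mul, smul_mul_assoc]
  linear_combination (norm := module) h - q • aE_mul_aE k q

end Aq

theorem stmt19_general (k : Type*) [Field k] :
    ∃ f : Aq k (-2) ≃ₐ[k] Aq k 2,
      f 1 = 1 ∧
      f (bE k (-2)) = aE k 2 ∧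
      f (aE k (-2)) = bE k 2 - 2 * aE k 2 ∧
      f (aE k (-2) * bE k (-2)) = -(aE k 2 * bE k 2) := by
  refine ⟨Aq.negEquiv 2, map_one _, Aq.negEquiv_bE, ?_, Aq.negEquiv_aE_mul_bE⟩
  rw [Aq.negEquiv_aE, ofNat_smul_eq_nsmul, nsmul_eq_mul, Nat.cast_ofNat]

/-- For `char k ≠ 2`, the map `f : A_{-2} → A_2` with `f(1) = 1`, `f(b) = a`,
`f(a) = b - 2a`, `f(ab) = -ab` is an algebra isomorphism. -/
theorem stmt19 (k : Type*) [Field k] (hchar : ringChar k ≠ 2) :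
    ∃ f : Aq k (-2) ≃ₐ[k] Aq k 2,
      f 1 = 1 ∧
      f (bE k (-2)) = aE k 2 ∧
      f (aE k (-2)) = bE k 2 - 2 * aE k 2 ∧
      f (aE k (-2) * bE k (-2)) = -(aE k 2 * bE k 2) :=
  stmt19_general k
end
end
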